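/- arXiv:2403.14043 — 7 statements merged into one kernel-verified Lean document; each statement's English description precedes it below -/
import Mathlib

section
/- For any relational frame (X, ◁), the following are equivalent: (a) for every c_◁-fixpoint A, A ∩ ¬_◁(A) = c_◁(∅); (b) ◁ is pseudo-reflexive, i.e., for every x ∈ X such that there exists some y with y ◁ x, there exists z with z ◁ x such that z pre-refines x. -/
/-- The closure operator `c_◁` of a relational frame `(X, ◁)`, where `lt y x` means `y ◁ x`. -/
def clOp {X : Type*} (lt : X → X → Prop) (A : Set X) : Set X :=
  {x | ∀ y, lt y x → ∃ z, lt y z ∧ z ∈ A}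

/-- The negation operation `¬_◁` of a relational frame. -/
def ngOp {X : Type*} (lt : X → X → Prop) (A : Set X) : Set X :=
  {x | ∀ y, lt y x → y ∉ A}

/-- The necessity operation `□_R`. -/
def boxOp {X : Type*} (R : X → X → Prop) (A : Set X) : Set X :=
  {x | ∀ y, R x y → y ∈ A}

/-- The possibility operation `◇_Q`. -/
def diaOp {X : Type*} (lt Q : X → X → Prop) (A : Set X) : Set X :=
  {x | ∀ x', lt x' x → ∃ y' y, Q x' y' ∧ lt y' y ∧ y ∈ A}

/-- The defining condition of a modal frame (interaction of `R` and `◁`). -/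
def IsModalFrame {X : Type*} (lt R : X → X → Prop) : Prop :=
  ∀ x y z, R x y → lt z y →
    ∃ x', lt x' x ∧ ∀ x'', lt x' x'' → ∃ y'', R x'' y'' ∧ lt z y''

/-- The additivity condition of a modal frame (interaction of `Q` and `◁`). -/
def IsAdditiveFrame {X : Type*} (lt Q : X → X → Prop) : Prop :=
  ∀ x y z, Q x y → lt y z →
    ∃ x', lt x x' ∧ ∀ x'', lt x'' x' → ∃ y'', Q x'' y'' ∧ lt y'' z

/-- The negativity condition of a modal frame. -/
def IsNegativeFrame {X : Type*} (lt R Q : X → X → Prop) : Prop :=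
  ∀ x y z, R x y → lt z y →
    ∃ x', lt x' x ∧ ∀ x'', lt x'' x' → ∃ y'', Q x'' y'' ∧ lt y'' z

/-- `z` pre-refines `x`. -/
def PreRefines {X : Type*} (lt : X → X → Prop) (z x : X) : Prop :=
  ∀ w, lt w z → lt w x

/-- `◁` is pseudo-reflexive. -/
def PseudoRefl {X : Type*} (lt : X → X → Prop) : Prop :=
  ∀ x, (∃ y, lt y x) → ∃ z, lt z x ∧ PreRefines lt z x

/-- `◁` is pseudo-symmetric. -/
def PseudoSymm {X : Type*} (lt : X → X → Prop) : Prop :=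
  ∀ x y, lt y x → ∃ z, lt z y ∧ PreRefines lt z x

section RelationalFrame

variable {X : Type*} {lt : X → X → Prop} {A B : Set X} {x z : X}

theorem mem_clOp_empty : x ∈ clOp lt ∅ ↔ ∀ y, ¬ lt y x := by
  simp [clOp]

theorem clOp_mono (h : A ⊆ B) : clOp lt A ⊆ clOp lt B :=
  fun _ hx y hy ↦ (hx y hy).imp fun _ ⟨hyz, hz⟩ ↦ ⟨hyz, h hz⟩

theorem clOp_clOp (A : Set X) : clOp lt (clOp lt A) = clOp lt A := by
  ext u
  constructor
  · intro hu v hv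
    obtain ⟨w, hvw, hw⟩ := hu v hv
    exact hw v hvw
  · exact fun hu v hv ↦ ⟨u, hv, hu⟩

theorem PreRefines.refl (x : X) : PreRefines lt x x := fun _ h ↦ h

theorem PreRefines.mem_clOp (hzx : PreRefines lt z x) (hx : x ∈ A) : z ∈ clOp lt A :=
  fun v hv ↦ ⟨x, hzx v hv, hx⟩

theorem mem_clOp_singleton : z ∈ clOp lt {x} ↔ PreRefines lt z x := by
  refine ⟨fun hz w hw ↦ ?_, fun hzx ↦ hzx.mem_clOp rfl⟩
  obtain ⟨u, hwu, rfl⟩ := hz w hw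
  exact hwu

theorem mem_ngOp_clOp_singleton :
    x ∈ ngOp lt (clOp lt {x}) ↔ ∀ z, lt z x → ¬ PreRefines lt z x := by
  simp only [ngOp, Set.mem_ofPred_eq, mem_clOp_singleton]

theorem clOp_empty_subset_inter_ngOp (hA : clOp lt A = A) : clOp lt ∅ ⊆ A ∩ ngOp lt A :=
  fun _ hx ↦ ⟨hA ▸ clOp_mono (Set.empty_subset A) hx,
    fun y hy ↦ absurd hy (mem_clOp_empty.1 hx y)⟩

theorem inter_ngOp_subset_clOp_empty (hlt : PseudoRefl lt) (hA : clOp lt A = A) :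
    A ∩ ngOp lt A ⊆ clOp lt ∅ := by
  rintro x ⟨hxA, hxn⟩
  refine mem_clOp_empty.2 fun y hyx ↦ ?_
  obtain ⟨z, hzx, hzx'⟩ := hlt x ⟨y, hyx⟩
  exact hxn z hzx (hA ▸ hzx'.mem_clOp hxA)

end RelationalFrame

theorem stmt_4_general {X : Type*} (lt : X → X → Prop) :
    (∀ A : Set X, clOp lt A = A → A ∩ ngOp lt A = clOp lt ∅) ↔ PseudoRefl lt := by
  refine ⟨fun h x ⟨y, hyx⟩ ↦ ?_, fun hlt A hA ↦ ?_⟩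
  · -- `c({x})` is the fixpoint that witnesses the failure of (a)
    by_contra! hno
    have hx : x ∈ clOp lt {x} ∩ ngOp lt (clOp lt {x}) :=
      ⟨mem_clOp_singleton.2 (.refl x), mem_ngOp_clOp_singleton.2 hno⟩
    rw [h _ (clOp_clOp _)] at hx
    exact mem_clOp_empty.1 hx y hyx
  · exact (inter_ngOp_subset_clOp_empty hlt hA).antisymm (clOp_empty_subset_inter_ngOp hA)

theorem stmt_4 {X : Type*} [Nonempty X] (lt : X → X → Prop) :
    (∀ A : Set X, clOp lt A = A → A ∩ ngOp lt A = clOp lt ∅) ↔ PseudoRefl lt :=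
  stmt_4_general lt
end

section
/- Let L be a lattice and P a separating set of pairs of elements of L, with the relation (a,b) ◁ (c,d) iff c ≰ b, and define f(a) = {(x,y) ∈ P : x ≤ a}. Then: (i) f is a complete embedding of L into the complete lattice of c_◁-fixpoints of the relational frame (P, ◁), i.e., f is injective, each f(a) is a c_◁-fixpoint, and f preserves all meets and joins that exist in L; and (ii) if L is a complete lattice, then f is an isomorphism from L onto the lattice of c_◁-fixpoints of (P, ◁). -/
/-- The relation `(a,b) ◁ (c,d) iff c ≰ b` on a set `P` of pairs of lattice elements. -/
def pairLt {L : Type*} [Lattice L] (P : Set (L × L)) (x y : ↥P) : Prop :=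
  ¬ ((y : L × L).1 ≤ (x : L × L).2)

/-- `P` is a separating set of pairs of elements of `L`. -/
def Separating {L : Type*} [Lattice L] (P : Set (L × L)) : Prop :=
  (∀ a b : L, ¬ a ≤ b → ∃ p ∈ P, p.1 ≤ a ∧ ¬ p.1 ≤ b) ∧
  (∀ (b : L) (p : ↥P), ¬ (p : L × L).1 ≤ b →
    ∃ p' : ↥P, pairLt P p' p ∧ ∀ p'' : ↥P, pairLt P p' p'' → ¬ (p'' : L × L).1 ≤ b)

/-!
Write `↓a` for the pairs of `P` whose first component lies below `a`. The first separation
condition says `a ≤ b ↔ ↓a ⊆ ↓b`. The key fact is that the `c_◁`-closure of any `A ⊆ P` is `↓a`,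
where `a` is the join of the first components of `A`: if `x ∈ ↓a` and `y ◁ x`, then `a ≰ y.2`, so
some `z ∈ A` has `z.1 ≰ y.2`, i.e. `y ◁ z`; conversely the second separation condition provides,
for `x ∉ ↓a`, a witness `y ◁ x` that is related to no element of `↓a ⊇ A`. Every claim about the
embedding then follows by computing the join of the first components of `↓a`, of `⋃ b ∈ S, ↓b`,
or of a fixpoint `A`.
-/

section LowerPairs

variable {L : Type*} [Lattice L] {P : Set (L × L)}

variable (P) in
def lowerPairs (a : L) : Set ↥P := {x | (x : L × L).1 ≤ a}

variable (P) in
def firstComponents (A : Set ↥P) : Set L := (fun x : ↥P => (x : L × L).1) '' A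

theorem lowerPairs_subset_lowerPairs_iff (hP : Separating P) {a b : L} :
    lowerPairs P a ⊆ lowerPairs P b ↔ a ≤ b := by
  refine ⟨fun hab => ?_, fun hab x hx => le_trans hx hab⟩
  by_contra hnab
  obtain ⟨p, hpP, hpa, hpb⟩ := hP.1 a b hnab
  exact hpb (hab (show (⟨p, hpP⟩ : ↥P) ∈ lowerPairs P a from hpa))

theorem lowerPairs_injective (hP : Separating P) : Function.Injective (lowerPairs P) :=
  fun _ _ hab => le_antisymm ((lowerPairs_subset_lowerPairs_iff hP).1 hab.le)
    ((lowerPairs_subset_lowerPairs_iff hP).1 hab.ge)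

theorem lowerPairs_subset_clOp {A : Set ↥P} {a : L}
    (ha : a ∈ lowerBounds (upperBounds (firstComponents P A))) :
    lowerPairs P a ⊆ clOp (pairLt P) A := by
  intro x hxa y hyx
  have hay : ¬ a ≤ (y : L × L).2 := fun h => hyx (le_trans hxa h)
  have : ¬ (y : L × L).2 ∈ upperBounds (firstComponents P A) := fun h => hay (ha h)
  simp only [upperBounds, firstComponents, Set.forall_mem_image, Set.mem_ofPred_eq,
    not_forall] at this
  obtain ⟨z, hzA, hzy⟩ := this
  exact ⟨z, hzy, hzA⟩

theorem clOp_subset_lowerPairs (hP : Separating P) {A : Set ↥P} {a : L}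
    (ha : a ∈ upperBounds (firstComponents P A)) :
    clOp (pairLt P) A ⊆ lowerPairs P a := by
  intro x hx
  by_contra hxa
  obtain ⟨y, hyx, hy⟩ := hP.2 a x hxa
  obtain ⟨z, hyz, hzA⟩ := hx y hyx
  exact hy z hyz (ha ⟨z, hzA, rfl⟩)

theorem clOp_eq_lowerPairs (hP : Separating P) {A : Set ↥P} {a : L}
    (ha : IsLUB (firstComponents P A) a) : clOp (pairLt P) A = lowerPairs P a :=
  (clOp_subset_lowerPairs hP ha.1).antisymm (lowerPairs_subset_clOp ha.2)

theorem isLUB_firstComponents_biUnion_lowerPairs (hP : Separating P) {S : Set L} {a : L}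
    (ha : IsLUB S a) : IsLUB (firstComponents P (⋃ b ∈ S, lowerPairs P b)) a := by
  have mem_of_le {x : ↥P} {b : L} (hbS : b ∈ S) (hxb : (x : L × L).1 ≤ b) :
      (x : L × L).1 ∈ firstComponents P (⋃ b ∈ S, lowerPairs P b) :=
    ⟨x, Set.mem_biUnion hbS hxb, rfl⟩
  refine ⟨?_, fun c hc => ha.2 fun b hbS => ?_⟩
  · rintro _ ⟨x, hx, rfl⟩
    obtain ⟨b, hbS, hxb⟩ := Set.mem_iUnion₂.1 hx
    exact le_trans hxb (ha.1 hbS)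
  · exact (lowerPairs_subset_lowerPairs_iff hP).1 fun x hxb => hc (mem_of_le hbS hxb)

theorem lowerPairs_eq_clOp_biUnion_of_isLUB (hP : Separating P) {S : Set L} {a : L}
    (ha : IsLUB S a) :
    lowerPairs P a = clOp (pairLt P) (⋃ b ∈ S, lowerPairs P b) :=
  (clOp_eq_lowerPairs hP (isLUB_firstComponents_biUnion_lowerPairs hP ha)).symm

theorem clOp_lowerPairs (hP : Separating P) (a : L) :
    clOp (pairLt P) (lowerPairs P a) = lowerPairs P a := by
  simpa only [Set.biUnion_singleton] using
    (lowerPairs_eq_clOp_biUnion_of_isLUB hP (isLUB_singleton (a := a))).symm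

theorem lowerPairs_eq_biInter_of_isGLB {S : Set L} {a : L} (ha : IsGLB S a) :
    lowerPairs P a = ⋂ b ∈ S, lowerPairs P b := by
  ext x
  simp only [lowerPairs, Set.mem_ofPred_eq, Set.mem_iInter]
  exact ⟨fun hxa b hbS => le_trans hxa (ha.1 hbS), fun hx => ha.2 hx⟩

theorem exists_lowerPairs_eq_of_clOp_eq (hP : Separating P) {A : Set ↥P}
    (hA : clOp (pairLt P) A = A) (hLUB : ∃ a : L, IsLUB (firstComponents P A) a) :
    ∃ a : L, lowerPairs P a = A := by
  obtain ⟨a, ha⟩ := hLUB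
  exact ⟨a, (clOp_eq_lowerPairs hP ha).symm.trans hA⟩

end LowerPairs

theorem stmt_6 {L : Type*} [Lattice L] (P : Set (L × L)) (hP : Separating P)
    (f : L → Set ↥P) (hf : ∀ a : L, f a = {x : ↥P | (x : L × L).1 ≤ a}) :
    Function.Injective f ∧
    (∀ a : L, clOp (pairLt P) (f a) = f a) ∧
    (∀ (S : Set L) (a : L), IsGLB S a → f a = ⋂ b ∈ S, f b) ∧
    (∀ (S : Set L) (a : L), IsLUB S a → f a = clOp (pairLt P) (⋃ b ∈ S, f b)) ∧
    ((∀ S : Set L, ∃ a : L, IsLUB S a) →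
      ∀ A : Set ↥P, clOp (pairLt P) A = A → ∃ a : L, f a = A) := by
  obtain rfl : f = lowerPairs P := funext hf
  exact ⟨lowerPairs_injective hP, clOp_lowerPairs hP, fun _ _ => lowerPairs_eq_biInter_of_isGLB,
    fun _ _ => lowerPairs_eq_clOp_biUnion_of_isLUB hP,
    fun hComplete A hA => exists_lowerPairs_eq_of_clOp_eq hP hA (hComplete _)⟩
end

section
/- Let (X, ◁, R, Q) be a modal frame. Then: (i) if A ⊆ X is a c_◁-fixpoint, so is □_R(A); (ii) if A ⊆ X is a c_◁-fixpoint, so is ◇_Q(A); (iii) □_R is completely multiplicative: for any family {A_i}_{i∈I} of subsets of X, □_R(⋂_{i∈I} A_i) = ⋂_{i∈I} □_R(A_i); and (iv) ◇_Q is monotone: A ⊆ B implies ◇_Q(A) ⊆ ◇_Q(B). -/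
section

variable {X : Type*} {lt R Q : X → X → Prop} {A : Set X}

theorem subset_clOp (lt : X → X → Prop) (A : Set X) : A ⊆ clOp lt A :=
  fun x hx _ hyx => ⟨x, hyx, hx⟩

theorem clOp_eq_self_of_subset (h : clOp lt A ⊆ A) : clOp lt A = A :=
  h.antisymm (subset_clOp lt A)

theorem clOp_boxOp_subset (hMF : IsModalFrame lt R) (hA : clOp lt A ⊆ A) :
    clOp lt (boxOp R A) ⊆ boxOp R A := by
  intro x hx y hxy
  apply hA
  intro z hzy
  obtain ⟨x', hx'x, hx'⟩ := hMF x y z hxy hzy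
  obtain ⟨x'', hx'x'', hx''⟩ := hx x' hx'x
  obtain ⟨y'', hx''y'', hzy''⟩ := hx' x'' hx'x''
  exact ⟨y'', hzy'', hx'' y'' hx''y''⟩

theorem clOp_diaOp_subset : clOp lt (diaOp lt Q A) ⊆ diaOp lt Q A := by
  intro x hx x' hx'x
  obtain ⟨z, hx'z, hz⟩ := hx x' hx'x
  exact hz x' hx'z

theorem boxOp_iInter {ι : Sort*} (A : ι → Set X) :
    boxOp R (⋂ i, A i) = ⋂ i, boxOp R (A i) := by
  ext x
  simp only [boxOp, Set.mem_iInter, Set.mem_ofPred_eq]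
  exact ⟨fun h i y hxy => h y hxy i, fun h y hxy i => h i y hxy⟩

theorem diaOp_mono : Monotone (diaOp lt Q) := by
  intro A B hAB x hx x' hx'x
  obtain ⟨y', y, hQ, hy'y, hy⟩ := hx x' hx'x
  exact ⟨y', y, hQ, hy'y, hAB hy⟩

end

theorem stmt_7_general {X : Type*} (lt R Q : X → X → Prop)
    (hMF : IsModalFrame lt R) :
    (∀ A : Set X, clOp lt A = A → clOp lt (boxOp R A) = boxOp R A) ∧
    (∀ A : Set X, clOp lt A = A → clOp lt (diaOp lt Q A) = diaOp lt Q A) ∧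
    (∀ (ι : Type*) (A : ι → Set X), boxOp R (⋂ i, A i) = ⋂ i, boxOp R (A i)) ∧
    (∀ A B : Set X, A ⊆ B → diaOp lt Q A ⊆ diaOp lt Q B) :=
  ⟨fun _ hA => clOp_eq_self_of_subset (clOp_boxOp_subset hMF hA.subset),
    fun _ _ => clOp_eq_self_of_subset clOp_diaOp_subset,
    fun _ => boxOp_iInter,
    fun _ _ => diaOp_mono.imp⟩

theorem stmt_7 {X : Type*} [Nonempty X] (lt R Q : X → X → Prop)
    (hMF : IsModalFrame lt R) :
    (∀ A : Set X, clOp lt A = A → clOp lt (boxOp R A) = boxOp R A) ∧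
    (∀ A : Set X, clOp lt A = A → clOp lt (diaOp lt Q A) = diaOp lt Q A) ∧
    (∀ (ι : Type*) (A : ι → Set X), boxOp R (⋂ i, A i) = ⋂ i, boxOp R (A i)) ∧
    (∀ A B : Set X, A ⊆ B → diaOp lt Q A ⊆ diaOp lt Q B) :=
  stmt_7_general lt R Q hMF
end

section
/- Let L be a complete lattice equipped with unary operations ¬, □, ◇ where ¬ is antitone with ¬1 = 0, □ is completely multiplicative (□(⋀S) = ⋀{□a : a ∈ S} for every S ⊆ L), and ◇ is completely additive (◇(⋁S) = ⋁{◇a : a ∈ S} for every S ⊆ L). Define X = {(a,b) ∈ L × L : ¬a ≤ b}, write x₀, x₁ for the components of x ∈ X, and define: x ◁ y iff y₀ ≰ x₁; x R y iff for all a ∈ L, x₀ ≤ □a implies y₀ ≤ a; x Q y iff for all a ∈ L, ◇a ≤ x₁ implies a ≤ y₁. Then (X, ◁, R, Q) is an additive modal frame, and the map f(a) = {x ∈ X : x₀ ≤ a} is an order isomorphism from L onto the complete lattice of c_◁-fixpoints of (X, ◁) satisfying f(¬a) = ¬_◁(f(a)), f(□a) = □_R(f(a)), and f(◇a) = ◇_Q(f(a))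 for all a ∈ L. -/
/-- The set `X = {(a,b) : ¬a ≤ b}` of the representation. -/
def RepX {L : Type*} [CompleteLattice L] (neg : L → L) : Type _ :=
  {p : L × L // neg p.1 ≤ p.2}

/-- `x ◁ y` iff `y₀ ≰ x₁`. -/
def repLt {L : Type*} [CompleteLattice L] (neg : L → L) (x y : RepX neg) : Prop :=
  ¬ (y.1.1 ≤ x.1.2)

/-- `x R y` iff for all `a`, `x₀ ≤ □a` implies `y₀ ≤ a`. -/
def repR {L : Type*} [CompleteLattice L] (neg Box : L → L) (x y : RepX neg) : Prop :=
  ∀ a : L, x.1.1 ≤ Box a → y.1.1 ≤ a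

/-- `x Q y` iff for all `a`, `◇a ≤ x₁` implies `a ≤ y₁`. -/
def repQ {L : Type*} [CompleteLattice L] (neg Dia : L → L) (x y : RepX neg) : Prop :=
  ∀ a : L, Dia a ≤ x.1.2 → a ≤ y.1.2

/-- The representation map `f(a) = {x : x₀ ≤ a}`. -/
def repf {L : Type*} [CompleteLattice L] (neg : L → L) (a : L) : Set (RepX neg) :=
  {x | x.1.1 ≤ a}

/-!
Both modalities have adjoints: `□` is completely multiplicative, so it has the lower adjoint
`□⁻ t = ⋀ {c | t ≤ □c}`, and `◇` is completely additive, so it has the upper adjoint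
`◇⁺ t = ⋁ {c | ◇c ≤ t}`. Through them `x R y` says `y₀ ≤ □⁻ x₀` and `x Q y` says `◇⁺ x₁ ≤ y₁`,
so every frame condition and every equation for `f` reduces to a lattice inequality, with
witnesses taken among the points `(a, ¬a)` and `(⊤, b)` of `X`.
-/

section Adjoints

variable {α β : Type*} [CompleteLattice α] [CompleteLattice β]

def lowerAdjointOf (u : β → α) (t : α) : β :=
  sInf {c | t ≤ u c}

def upperAdjointOf (l : α → β) (t : β) : α :=
  sSup {c | l c ≤ t}

theorem gc_lowerAdjointOf {u : β → α} (hu : ∀ S : Set β, u (sInf S) = sInf (u '' S)) :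
    GaloisConnection (lowerAdjointOf u) u := by
  have hmono : Monotone u := fun a b hab => by
    simpa [inf_eq_left.2 hab] using (hu {a, b}).le.trans (sInf_le ⟨b, by simp, rfl⟩)
  intro t c
  refine ⟨fun h => ?_, fun h => sInf_le h⟩
  calc t ≤ sInf (u '' {c | t ≤ u c}) := le_sInf (by rintro _ ⟨c, hc, rfl⟩; exact hc)
    _ = u (lowerAdjointOf u t) := (hu _).symm
    _ ≤ u c := hmono h

theorem gc_upperAdjointOf {l : α → β} (hl : ∀ S : Set α, l (sSup S) = sSup (l '' S)) :
    GaloisConnection l (upperAdjointOf l) :=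
  fun a b => (gc_lowerAdjointOf (α := βᵒᵈ) (β := αᵒᵈ) (u := l) hl b a).symm

end Adjoints

namespace RepX

variable {L : Type*} [CompleteLattice L] {neg Box Dia : L → L}

def diag (neg : L → L) (a : L) : RepX neg :=
  ⟨(a, neg a), le_rfl⟩

def top (hneg1 : neg ⊤ = ⊥) (b : L) : RepX neg :=
  ⟨(⊤, b), by simp [hneg1]⟩

theorem repR_iff (hBox : ∀ S : Set L, Box (sInf S) = sInf (Box '' S)) {x y : RepX neg} :
    repR neg Box x y ↔ y.1.1 ≤ lowerAdjointOf Box x.1.1 := by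
  simp only [repR, ← gc_lowerAdjointOf hBox _]
  exact ⟨fun h => h _ le_rfl, fun h _ ha => h.trans ha⟩

theorem repQ_iff (hDia : ∀ S : Set L, Dia (sSup S) = sSup (Dia '' S)) {x y : RepX neg} :
    repQ neg Dia x y ↔ upperAdjointOf Dia x.1.2 ≤ y.1.2 := by
  simp only [repQ, gc_upperAdjointOf hDia _ _]
  exact ⟨fun h => h _ le_rfl, fun h _ ha => ha.trans h⟩

theorem exists_repR_repLt_iff (hBox : ∀ S : Set L, Box (sInf S) = sInf (Box '' S))
    {x z : RepX neg} :
    (∃ y, repR neg Box x y ∧ repLt neg z y) ↔ ¬ lowerAdjointOf Box x.1.1 ≤ z.1.2 := by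
  simp only [repR_iff hBox, repLt]
  refine ⟨fun ⟨y, hxy, hzy⟩ h => hzy (hxy.trans h), fun h => ⟨diag neg _, le_rfl, h⟩⟩

theorem exists_repQ_repLt_iff (hneg1 : neg ⊤ = ⊥)
    (hDia : ∀ S : Set L, Dia (sSup S) = sSup (Dia '' S)) {x z : RepX neg} :
    (∃ y, repQ neg Dia x y ∧ repLt neg y z) ↔ ¬ z.1.1 ≤ upperAdjointOf Dia x.1.2 := by
  simp only [repQ_iff hDia, repLt]
  refine ⟨fun ⟨y, hxy, hyz⟩ h => hyz (h.trans hxy), fun h => ⟨top hneg1 _, le_rfl, h⟩⟩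

theorem isModalFrame (hneg1 : neg ⊤ = ⊥) (hBox : ∀ S : Set L, Box (sInf S) = sInf (Box '' S)) :
    IsModalFrame (repLt neg) (repR neg Box) := by
  intro x y z hxy hzy
  have hx : ¬ lowerAdjointOf Box x.1.1 ≤ z.1.2 := (exists_repR_repLt_iff hBox).1 ⟨y, hxy, hzy⟩
  refine ⟨top hneg1 (Box z.1.2), ?_, fun x'' hx'' => ?_⟩
  · exact mt (gc_lowerAdjointOf hBox _ _).2 hx
  · exact (exists_repR_repLt_iff hBox).2 (mt (gc_lowerAdjointOf hBox _ _).1 hx'')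

theorem isAdditiveFrame (hneg1 : neg ⊤ = ⊥)
    (hDia : ∀ S : Set L, Dia (sSup S) = sSup (Dia '' S)) :
    IsAdditiveFrame (repLt neg) (repQ neg Dia) := by
  intro x y z hxy hyz
  have hx : ¬ z.1.1 ≤ upperAdjointOf Dia x.1.2 :=
    (exists_repQ_repLt_iff hneg1 hDia).1 ⟨y, hxy, hyz⟩
  refine ⟨diag neg (Dia z.1.1), ?_, fun x'' hx'' => ?_⟩
  · exact mt (gc_upperAdjointOf hDia _ _).1 hx
  · exact (exists_repQ_repLt_iff hneg1 hDia).2 (mt (gc_upperAdjointOf hDia _ _).2 hx'')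

theorem repf_subset_repf {a b : L} : repf neg a ⊆ repf neg b ↔ a ≤ b :=
  ⟨fun h => h (show diag neg a ∈ repf neg a from le_rfl), fun h _ hx => le_trans hx h⟩

theorem clOp_repf (hneg1 : neg ⊤ = ⊥) (a : L) : clOp (repLt neg) (repf neg a) = repf neg a := by
  refine Set.Subset.antisymm (fun x hx => ?_) (fun x hx y hyx => ⟨x, hyx, hx⟩)
  by_contra hxa
  obtain ⟨z, hz, hza⟩ := hx (top hneg1 a) hxa
  exact hz hza

theorem repf_sSup_eq_of_clOp_eq {A : Set (RepX neg)} (hA : clOp (repLt neg) A = A) :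
    repf neg (sSup ((fun x : RepX neg => x.1.1) '' A)) = A := by
  refine Set.Subset.antisymm (fun x hx => ?_) (fun x hx => le_sSup ⟨x, hx, rfl⟩)
  rw [← hA]
  intro y hyx
  by_contra! hyA
  have : sSup ((fun x : RepX neg => x.1.1) '' A) ≤ y.1.2 := by
    refine sSup_le ?_
    rintro _ ⟨z, hz, rfl⟩
    exact not_not.1 (hyA z · hz)
  exact hyx (hx.trans this)

theorem repf_neg (hneg : ∀ a b : L, a ≤ b → neg b ≤ neg a) (a : L) :
    repf neg (neg a) = ngOp (repLt neg) (repf neg a) := by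
  ext x
  refine ⟨fun hx y hyx hya => hyx (hx.trans ((hneg _ _ hya).trans y.2)), fun hx => ?_⟩
  by_contra h
  exact hx (diag neg a) h le_rfl

theorem repf_box (hBox : ∀ S : Set L, Box (sInf S) = sInf (Box '' S)) (a : L) :
    repf neg (Box a) = boxOp (repR neg Box) (repf neg a) := by
  ext x
  simp only [repf, boxOp, Set.mem_ofPred_eq, repR_iff hBox, ← gc_lowerAdjointOf hBox _]
  exact ⟨fun h y hy => hy.trans h, fun h => h (diag neg _) le_rfl⟩

theorem repf_dia (hneg1 : neg ⊤ = ⊥) (hDia : ∀ S : Set L, Dia (sSup S) = sSup (Dia '' S))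
    (a : L) : repf neg (Dia a) = diaOp (repLt neg) (repQ neg Dia) (repf neg a) := by
  ext x
  simp only [repf, diaOp, Set.mem_ofPred_eq]
  refine ⟨fun hx x' hx'x => ?_, fun hx => ?_⟩
  · obtain ⟨y', hQ, hlt⟩ := (exists_repQ_repLt_iff hneg1 hDia (z := diag neg a)).2
      (mt (gc_upperAdjointOf hDia _ _).2 fun h => hx'x (hx.trans h))
    exact ⟨y', diag neg a, hQ, hlt, le_rfl⟩
  · by_contra hxa
    obtain ⟨y', y, hQ, hlt, hya⟩ := hx (top hneg1 (Dia a)) hxa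
    exact (exists_repQ_repLt_iff hneg1 hDia).1 ⟨y', hQ, hlt⟩
      (hya.trans ((gc_upperAdjointOf hDia _ _).1 le_rfl))

end RepX

theorem stmt_9 {L : Type*} [CompleteLattice L] (neg Box Dia : L → L)
    (hneg : ∀ a b : L, a ≤ b → neg b ≤ neg a) (hneg1 : neg ⊤ = ⊥)
    (hBox : ∀ S : Set L, Box (sInf S) = sInf (Box '' S))
    (hDia : ∀ S : Set L, Dia (sSup S) = sSup (Dia '' S)) :
    IsModalFrame (repLt neg) (repR neg Box) ∧
    IsAdditiveFrame (repLt neg) (repQ neg Dia) ∧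
    (∀ a b : L, a ≤ b ↔ repf neg a ⊆ repf neg b) ∧
    (∀ a : L, clOp (repLt neg) (repf neg a) = repf neg a) ∧
    (∀ A : Set (RepX neg), clOp (repLt neg) A = A → ∃ a : L, repf neg a = A) ∧
    (∀ a : L, repf neg (neg a) = ngOp (repLt neg) (repf neg a)) ∧
    (∀ a : L, repf neg (Box a) = boxOp (repR neg Box) (repf neg a)) ∧
    (∀ a : L, repf neg (Dia a) = diaOp (repLt neg) (repQ neg Dia) (repf neg a)) :=
  ⟨RepX.isModalFrame hneg1 hBox, RepX.isAdditiveFrame hneg1 hDia,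
    fun _ _ => RepX.repf_subset_repf.symm, RepX.clOp_repf hneg1,
    fun _ hA => ⟨_, RepX.repf_sSup_eq_of_clOp_eq hA⟩, RepX.repf_neg hneg, RepX.repf_box hBox,
    RepX.repf_dia hneg1 hDia⟩
end

section
/- Let (X, ◁, R, Q) be a modal frame in which Q ⊆ R (as binary relations). Then for every c_◁-fixpoint A ⊆ X, ◇_Q(¬_◁(A)) ⊆ ¬_◁(□_R(A)). -/
theorem stmt_15_general {X : Type*} (lt R Q : X → X → Prop)
    (hQR : ∀ x y, Q x y → R x y)
    (A : Set X) :
    diaOp lt Q (ngOp lt A) ⊆ ngOp lt (boxOp R A) := by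
  intro x hx y hyx hyBox
  obtain ⟨y', y'', hQ, hy'y'', hy''⟩ := hx y hyx
  exact hy'' y' hy'y'' (hyBox y' (hQR y y' hQ))

theorem stmt_15 {X : Type*} [Nonempty X] (lt R Q : X → X → Prop)
    (hMF : IsModalFrame lt R) (hQR : ∀ x y, Q x y → R x y)
    (A : Set X) (hA : clOp lt A = A) :
    diaOp lt Q (ngOp lt A) ⊆ ngOp lt (boxOp R A) :=
  stmt_15_general lt R Q hQR A
end

section
/- Let (X, ◁, R, Q) be a negative modal frame. Then for every c_◁-fixpoint A ⊆ X, ¬_◁(◇_Q(A)) ⊆ □_R(¬_◁(A)). -/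
theorem IsNegativeFrame.exists_lt_mem_diaOp {X : Type*} {lt R Q : X → X → Prop}
    (hNeg : IsNegativeFrame lt R Q) {A : Set X} {x y z : X} (hxy : R x y) (hzy : lt z y)
    (hzA : z ∈ A) : ∃ x', lt x' x ∧ x' ∈ diaOp lt Q A := by
  obtain ⟨x', hx'x, hx'⟩ := hNeg x y z hxy hzy
  refine ⟨x', hx'x, fun x'' hx''x' => ?_⟩
  obtain ⟨y'', hQ, hy''z⟩ := hx' x'' hx''x'
  exact ⟨y'', z, hQ, hy''z, hzA⟩

theorem stmt_16_general {X : Type*} (lt R Q : X → X → Prop)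
    (hNeg : IsNegativeFrame lt R Q)
    (A : Set X) :
    ngOp lt (diaOp lt Q A) ⊆ boxOp R (ngOp lt A) := by
  intro x hx y hxy z hzy hzA
  obtain ⟨x', hx'x, hx'A⟩ := hNeg.exists_lt_mem_diaOp hxy hzy hzA
  exact hx x' hx'x hx'A

theorem stmt_16 {X : Type*} [Nonempty X] (lt R Q : X → X → Prop)
    (hMF : IsModalFrame lt R) (hNeg : IsNegativeFrame lt R Q)
    (A : Set X) (hA : clOp lt A = A) :
    ngOp lt (diaOp lt Q A) ⊆ boxOp R (ngOp lt A) :=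
  stmt_16_general lt R Q hNeg A
end

section
/- Let L be a complete lattice equipped with unary operations ¬, □, ◇ where ¬ is dually self-adjoint (a ≤ ¬b implies b ≤ ¬a) with ¬1 = 0, □ is completely multiplicative (□(⋀S) = ⋀{□a : a ∈ S} for every S ⊆ L), ◇ is completely additive (◇(⋁S) = ⋁{◇a : a ∈ S} for every S ⊆ L), and ◇¬a ≤ ¬□a for all a ∈ L. Define X = {(a,b) ∈ L × L : ¬a ≤ b}, write x₀, x₁ for the components of x ∈ X, and define: x ◁ y iff y₀ ≰ x₁; x R y iff for all a ∈ L, (x₀ ≤ □a implies y₀ ≤ a) and (◇a ≤ x₁ implies a ≤ y₁); and Q = R. Then: (i) (X, ◁, R, Q) is a unified (R = Q) additive modal frame with ◁ pseudo-symmetric; (ii) the map f(a) = {x ∈ X : x₀ ≤ a} is an order isomorphism from L onto the complete lattice of c_◁-fixpoints of (X, ◁) satisfying f(¬a) = ¬_◁(f(a)), f(□a) = □_R(f(a)), and f(◇a) = ◇_Q(f(a)); (iii) if a ∧ ¬a = 0 for all a ∈ L, then ◁ is pseudo-reflexive; (iv) if ¬◇a ≤ □¬a for all a ∈ L, then the frame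 is negative. -/
/-- The unified relation: `x R y` iff for all `a`,
`x₀ ≤ □a` implies `y₀ ≤ a`, and `◇a ≤ x₁` implies `a ≤ y₁`. -/
def repR2 {L : Type*} [CompleteLattice L] (neg Box Dia : L → L) (x y : RepX neg) : Prop :=
  ∀ a : L, (x.1.1 ≤ Box a → y.1.1 ≤ a) ∧ (Dia a ≤ x.1.2 → a ≤ y.1.2)

/-!
Every point `x` has a canonical `R`-successor `y = (⋀ {a | x₀ ≤ □a}, ⋁ {a | ◇a ≤ x₁})`: complete
multiplicativity of `□` and additivity of `◇` give `y₀ ≤ a ↔ x₀ ≤ □a` and `a ≤ y₁ ↔ ◇a ≤ x₁`, and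
`◇¬ ≤ ¬□` puts `y` in `X`. This successor, the principal points `(a, ¬a)` and the points `(⊤, b)`
witness every existential in the frame conditions and in the equations for `f`; a `c_◁`-fixpoint
`A` is `f (⋁ {x₀ | x ∈ A})`.
-/

theorem monotone_of_map_sInf {α β : Type*} [CompleteLattice α] [CompleteLattice β] {f : α → β}
    (hf : ∀ S : Set α, f (sInf S) = sInf (f '' S)) : Monotone f :=
  OrderHomClass.mono (⟨f, hf⟩ : sInfHom α β)

theorem monotone_of_map_sSup {α β : Type*} [CompleteLattice α] [CompleteLattice β] {f : α → β}
    (hf : ∀ S : Set α, f (sSup S) = sSup (f '' S)) : Monotone f :=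
  OrderHomClass.mono (⟨f, hf⟩ : sSupHom α β)

theorem antitone_of_le_neg_swap {α : Type*} [Preorder α] {neg : α → α}
    (hdsa : ∀ a b : α, a ≤ neg b → b ≤ neg a) : Antitone neg :=
  fun _ _ hab => hdsa _ _ (hab.trans (hdsa _ _ le_rfl))

namespace RepX

variable {L : Type*} [CompleteLattice L] {neg : L → L}

def principal (neg : L → L) (a : L) : RepX neg := ⟨(a, neg a), le_rfl⟩

def ofTop (hneg_top : neg ⊤ = ⊥) (b : L) : RepX neg := ⟨(⊤, b), hneg_top ▸ bot_le⟩

end RepX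

section Lattice

variable {L : Type*} [CompleteLattice L] {neg : L → L}

theorem le_iff_repf_subset (a b : L) : a ≤ b ↔ repf neg a ⊆ repf neg b :=
  ⟨fun h _ hx => le_trans hx h, fun h => h (show RepX.principal neg a ∈ repf neg a from le_rfl)⟩

theorem clOp_repf (hneg_top : neg ⊤ = ⊥) (a : L) : clOp (repLt neg) (repf neg a) = repf neg a := by
  ext x
  refine ⟨fun hx => ?_, fun hx y hy => ⟨RepX.principal neg a, fun h => hy (hx.trans h), le_rfl⟩⟩
  by_contra hxa
  obtain ⟨z, hz, hza⟩ := hx (RepX.ofTop hneg_top a) hxa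
  exact hz hza

theorem repf_sSup_fst_eq_of_clOp_eq {A : Set (RepX neg)} (hA : clOp (repLt neg) A = A) :
    repf neg (sSup ((fun x : RepX neg => x.1.1) '' A)) = A := by
  ext x
  refine ⟨fun hx => ?_, fun hx => le_sSup ⟨x, hx, rfl⟩⟩
  rw [← hA]
  intro y hy
  by_contra! hyA
  refine hy (hx.trans (sSup_le ?_))
  rintro _ ⟨z, hz, rfl⟩
  by_contra hzy
  exact hyA z hzy hz

theorem repf_neg (hdsa : ∀ a b : L, a ≤ neg b → b ≤ neg a) (a : L) :
    repf neg (neg a) = ngOp (repLt neg) (repf neg a) := by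
  ext x
  refine ⟨fun hx y hyx hya => hyx (hx.trans ((antitone_of_le_neg_swap hdsa hya).trans y.2)),
    fun hx => ?_⟩
  by_contra hxa
  exact hx (RepX.principal neg a) hxa le_rfl

theorem pseudoSymm_repLt (hdsa : ∀ a b : L, a ≤ neg b → b ≤ neg a) : PseudoSymm (repLt neg) :=
  fun x y hyx => ⟨RepX.principal neg x.1.1, fun h => hyx ((hdsa _ _ h).trans y.2), fun _ => id⟩

theorem pseudoRefl_repLt (hcompl : ∀ a : L, a ⊓ neg a = ⊥) : PseudoRefl (repLt neg) := by
  rintro x ⟨y, hyx⟩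
  refine ⟨RepX.principal neg x.1.1, fun h => hyx ?_, fun _ => id⟩
  have hx : x.1.1 = ⊥ := le_bot_iff.mp (hcompl x.1.1 ▸ le_inf le_rfl h)
  exact hx ▸ bot_le

end Lattice

section Modal

variable {L : Type*} [CompleteLattice L] {neg Box Dia : L → L}

theorem exists_repR2_canonical (hdsa : ∀ a b : L, a ≤ neg b → b ≤ neg a)
    (hBox : ∀ S : Set L, Box (sInf S) = sInf (Box '' S))
    (hDia : ∀ S : Set L, Dia (sSup S) = sSup (Dia '' S))
    (hInt : ∀ a : L, Dia (neg a) ≤ neg (Box a)) (x : RepX neg) :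
    ∃ y, repR2 neg Box Dia x y ∧
      (∀ a, y.1.1 ≤ a → x.1.1 ≤ Box a) ∧ (∀ a, a ≤ y.1.2 → Dia a ≤ x.1.2) := by
  set b := sInf {a | x.1.1 ≤ Box a}
  set d := sSup {a | Dia a ≤ x.1.2}
  have hb : x.1.1 ≤ Box b := by
    rw [hBox]
    exact le_sInf (by rintro _ ⟨a, ha, rfl⟩; exact ha)
  have hd : Dia d ≤ x.1.2 := by
    rw [hDia]
    exact sSup_le (by rintro _ ⟨a, ha, rfl⟩; exact ha)
  have hbd : neg b ≤ d := le_sSup ((hInt b).trans ((antitone_of_le_neg_swap hdsa hb).trans x.2))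
  exact ⟨⟨(b, d), hbd⟩, fun a => ⟨fun h => sInf_le h, fun h => le_sSup h⟩,
    fun a ha => hb.trans (monotone_of_map_sInf hBox ha),
    fun a ha => (monotone_of_map_sSup hDia ha).trans hd⟩

theorem exists_repR2_not_fst_le (hdsa : ∀ a b : L, a ≤ neg b → b ≤ neg a)
    (hBox : ∀ S : Set L, Box (sInf S) = sInf (Box '' S))
    (hDia : ∀ S : Set L, Dia (sSup S) = sSup (Dia '' S))
    (hInt : ∀ a : L, Dia (neg a) ≤ neg (Box a)) {x : RepX neg} {a : L} (hxa : ¬ x.1.1 ≤ Box a) :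
    ∃ y, repR2 neg Box Dia x y ∧ ¬ y.1.1 ≤ a := by
  obtain ⟨y, hxy, hy, -⟩ := exists_repR2_canonical hdsa hBox hDia hInt x
  exact ⟨y, hxy, fun h => hxa (hy a h)⟩

theorem exists_repR2_not_le_snd (hdsa : ∀ a b : L, a ≤ neg b → b ≤ neg a)
    (hBox : ∀ S : Set L, Box (sInf S) = sInf (Box '' S))
    (hDia : ∀ S : Set L, Dia (sSup S) = sSup (Dia '' S))
    (hInt : ∀ a : L, Dia (neg a) ≤ neg (Box a)) {x : RepX neg} {a : L} (hxa : ¬ Dia a ≤ x.1.2) :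
    ∃ y, repR2 neg Box Dia x y ∧ ¬ a ≤ y.1.2 := by
  obtain ⟨y, hxy, -, hy⟩ := exists_repR2_canonical hdsa hBox hDia hInt x
  exact ⟨y, hxy, fun h => hxa (hy a h)⟩

theorem isModalFrame_repR2 (hdsa : ∀ a b : L, a ≤ neg b → b ≤ neg a) (hneg_top : neg ⊤ = ⊥)
    (hBox : ∀ S : Set L, Box (sInf S) = sInf (Box '' S))
    (hDia : ∀ S : Set L, Dia (sSup S) = sSup (Dia '' S))
    (hInt : ∀ a : L, Dia (neg a) ≤ neg (Box a)) :
    IsModalFrame (repLt neg) (repR2 neg Box Dia) :=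
  fun _ _ z hxy hzy => ⟨RepX.ofTop hneg_top (Box z.1.2), fun h => hzy ((hxy z.1.2).1 h),
    fun _ h => exists_repR2_not_fst_le hdsa hBox hDia hInt h⟩

theorem isAdditiveFrame_repR2 (hdsa : ∀ a b : L, a ≤ neg b → b ≤ neg a)
    (hBox : ∀ S : Set L, Box (sInf S) = sInf (Box '' S))
    (hDia : ∀ S : Set L, Dia (sSup S) = sSup (Dia '' S))
    (hInt : ∀ a : L, Dia (neg a) ≤ neg (Box a)) :
    IsAdditiveFrame (repLt neg) (repR2 neg Box Dia) :=
  fun _ _ z hxy hyz => ⟨RepX.principal neg (Dia z.1.1), fun h => hyz ((hxy z.1.1).2 h),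
    fun _ h => exists_repR2_not_le_snd hdsa hBox hDia hInt h⟩

theorem isNegativeFrame_repR2 (hdsa : ∀ a b : L, a ≤ neg b → b ≤ neg a)
    (hBox : ∀ S : Set L, Box (sInf S) = sInf (Box '' S))
    (hDia : ∀ S : Set L, Dia (sSup S) = sSup (Dia '' S))
    (hInt : ∀ a : L, Dia (neg a) ≤ neg (Box a))
    (hneg_dia : ∀ a : L, neg (Dia a) ≤ Box (neg a)) :
    IsNegativeFrame (repLt neg) (repR2 neg Box Dia) (repR2 neg Box Dia) :=
  fun _ _ z hxy hzy => ⟨RepX.principal neg (Dia z.1.1),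
    fun h => hzy (((hxy (neg z.1.1)).1 (h.trans (hneg_dia z.1.1))).trans z.2),
    fun _ h => exists_repR2_not_le_snd hdsa hBox hDia hInt h⟩

theorem repf_box (hdsa : ∀ a b : L, a ≤ neg b → b ≤ neg a)
    (hBox : ∀ S : Set L, Box (sInf S) = sInf (Box '' S))
    (hDia : ∀ S : Set L, Dia (sSup S) = sSup (Dia '' S))
    (hInt : ∀ a : L, Dia (neg a) ≤ neg (Box a)) (a : L) :
    repf neg (Box a) = boxOp (repR2 neg Box Dia) (repf neg a) := by
  ext x
  refine ⟨fun hx y hxy => (hxy a).1 hx, fun hx => ?_⟩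
  by_contra hxa
  obtain ⟨y, hxy, hya⟩ := exists_repR2_not_fst_le hdsa hBox hDia hInt hxa
  exact hya (hx y hxy)

theorem repf_dia (hdsa : ∀ a b : L, a ≤ neg b → b ≤ neg a) (hneg_top : neg ⊤ = ⊥)
    (hBox : ∀ S : Set L, Box (sInf S) = sInf (Box '' S))
    (hDia : ∀ S : Set L, Dia (sSup S) = sSup (Dia '' S))
    (hInt : ∀ a : L, Dia (neg a) ≤ neg (Box a)) (a : L) :
    repf neg (Dia a) = diaOp (repLt neg) (repR2 neg Box Dia) (repf neg a) := by
  ext x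
  refine ⟨fun hx x' hx'x => ?_, fun hx => ?_⟩
  · obtain ⟨y', hxy', hay'⟩ :=
      exists_repR2_not_le_snd hdsa hBox hDia hInt fun h => hx'x (hx.trans h)
    exact ⟨y', RepX.principal neg a, hxy', hay', le_rfl⟩
  · by_contra hxa
    obtain ⟨y', y, hxy', hy'y, hya⟩ := hx (RepX.ofTop hneg_top (Dia a)) hxa
    exact hy'y (hya.trans ((hxy' a).2 le_rfl))

end Modal

theorem stmt_17 {L : Type*} [CompleteLattice L] (neg Box Dia : L → L)
    (hdsa : ∀ a b : L, a ≤ neg b → b ≤ neg a) (hneg1 : neg ⊤ = ⊥)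
    (hBox : ∀ S : Set L, Box (sInf S) = sInf (Box '' S))
    (hDia : ∀ S : Set L, Dia (sSup S) = sSup (Dia '' S))
    (hInt : ∀ a : L, Dia (neg a) ≤ neg (Box a))
    (R Q : RepX neg → RepX neg → Prop)
    (hR : R = repR2 neg Box Dia) (hQ : Q = R) :
    (IsModalFrame (repLt neg) R ∧ IsAdditiveFrame (repLt neg) Q ∧ Q = R ∧
      PseudoSymm (repLt neg)) ∧
    ((∀ a b : L, a ≤ b ↔ repf neg a ⊆ repf neg b) ∧
     (∀ a : L, clOp (repLt neg) (repf neg a) = repf neg a) ∧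
     (∀ A : Set (RepX neg), clOp (repLt neg) A = A → ∃ a : L, repf neg a = A) ∧
     (∀ a : L, repf neg (neg a) = ngOp (repLt neg) (repf neg a)) ∧
     (∀ a : L, repf neg (Box a) = boxOp R (repf neg a)) ∧
     (∀ a : L, repf neg (Dia a) = diaOp (repLt neg) Q (repf neg a))) ∧
    ((∀ a : L, a ⊓ neg a = ⊥) → PseudoRefl (repLt neg)) ∧
    ((∀ a : L, neg (Dia a) ≤ Box (neg a)) → IsNegativeFrame (repLt neg) R Q) := by
  subst hR hQ
  refine ⟨⟨isModalFrame_repR2 hdsa hneg1 hBox hDia hInt,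
      isAdditiveFrame_repR2 hdsa hBox hDia hInt, rfl, pseudoSymm_repLt hdsa⟩,
    ⟨le_iff_repf_subset, clOp_repf hneg1, fun _ hA => ⟨_, repf_sSup_fst_eq_of_clOp_eq hA⟩,
      repf_neg hdsa, repf_box hdsa hBox hDia hInt, repf_dia hdsa hneg1 hBox hDia hInt⟩,
    pseudoRefl_repLt, isNegativeFrame_repR2 hdsa hBox hDia hInt⟩
end
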